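/- Fix a ≥ 0, b ≥ 0, and let f : ℝ² → ℝ be measurable with 0 ≤ f(k) ≤ 1 for all k and such that k ↦ ε(k)·f(k) is integrable over ℝ². Then lim_{μ → +∞} ∫_{ℝ²} λ(ε(k), exp(−μ/k_BT); a, b; f(k)) dk = +∞. -/

import Mathlib

/-!
Write `ψ_μ(k) = ψ(ε(k), e^{-μ/k_BT}; a, b)`. The product `ψ · (1 + ξ e^{ε/k_BT})` is bounded by
`psiBound`, an affine function of `ε` that does not depend on `ξ`; hence
`λ ≥ ψ - f · psiBound(ε)`, whose last term is integrable because `ε f` is, and it suffices to show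
`∫ ψ_μ → ∞`. On the annulus `1 ≤ |k| < R` with `ε(k) + b ≤ μ` the first Fermi factor of `ψ_μ` is
at least `1/2`, so `ψ_μ ≥ ħv_F / 2` there, and the annulus has area `π (R² - 1)`. All integrals
are finite by the decay `ψ ≤ psiBound(ε) e^{-ε/k_BT} / ξ`.
-/

/-- `ψ(ε,ξ;a,b) = (a+1)(ε+b)/(1 + ξ·e^{(ε+b)/k_BT}) + a[ε−b]₊/(1 + ξ·e^{[ε−b]₊/k_BT})`. -/
noncomputable def psi (kBT ε ξ a b : ℝ) : ℝ :=
  (a + 1) * (ε + b) / (1 + ξ * Real.exp ((ε + b) / kBT)) +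
    a * max (ε - b) 0 / (1 + ξ * Real.exp (max (ε - b) 0 / kBT))

/-- `λ(ε,ξ;a,b;φ) = ψ(ε,ξ;a,b)·(1 − φ·(1 + ξ·e^{ε/k_BT}))`. -/
noncomputable def lam (kBT ε ξ a b φ : ℝ) : ℝ :=
  psi kBT ε ξ a b * (1 - φ * (1 + ξ * Real.exp (ε / kBT)))

open MeasureTheory Filter Real Metric

section Pointwise

variable {kBT ε ξ a b φ : ℝ}

lemma div_one_add_mul_exp_mul_le {T x s t r : ℝ} (hT : 0 ≤ T) (hx : 0 ≤ x) (hξ : 0 ≤ ξ)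
    (hr : 0 ≤ r) (hts : t ≤ s + r) :
    x / (1 + ξ * exp (s / T)) * (1 + ξ * exp (t / T)) ≤ x * exp (r / T) := by
  have hexp : exp (t / T) ≤ exp (s / T) * exp (r / T) := by
    rw [← exp_add, ← add_div]; gcongr
  have hden : 1 + ξ * exp (t / T) ≤ (1 + ξ * exp (s / T)) * exp (r / T) := by
    nlinarith [one_le_exp (div_nonneg hr hT), mul_le_mul_of_nonneg_left hexp hξ]
  calc x / (1 + ξ * exp (s / T)) * (1 + ξ * exp (t / T))
      ≤ x / (1 + ξ * exp (s / T)) * ((1 + ξ * exp (s / T)) * exp (r / T)) := by gcongr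
    _ = x * exp (r / T) := by field_simp

lemma psi_nonneg (hε : 0 ≤ ε) (hξ : 0 ≤ ξ) (ha : 0 ≤ a) (hb : 0 ≤ b) :
    0 ≤ psi kBT ε ξ a b := by
  unfold psi
  have : 0 ≤ max (ε - b) 0 := le_max_right _ _
  positivity

noncomputable def psiBound (kBT a b ε : ℝ) : ℝ :=
  ((a + 1) + a * exp (b / kBT)) * ε + (a + 1) * b

lemma psiBound_nonneg (hε : 0 ≤ ε) (ha : 0 ≤ a) (hb : 0 ≤ b) : 0 ≤ psiBound kBT a b ε := by
  unfold psiBound; positivity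

lemma psi_mul_le_psiBound (hkBT : 0 ≤ kBT) (hε : 0 ≤ ε) (hξ : 0 ≤ ξ) (ha : 0 ≤ a)
    (hb : 0 ≤ b) :
    psi kBT ε ξ a b * (1 + ξ * exp (ε / kBT)) ≤ psiBound kBT a b ε := by
  have hm : max (ε - b) 0 ≤ ε := max_le (by linarith) hε
  -- `ε ≤ (ε + b) + 0` and `ε ≤ [ε - b]₊ + b`: only the second term costs a factor `e^{b/k_BT}`.
  have h₁ := div_one_add_mul_exp_mul_le (x := (a + 1) * (ε + b)) (s := ε + b) (t := ε) (r := 0) hkBT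
    (by positivity) hξ le_rfl (by linarith)
  have h₂ := div_one_add_mul_exp_mul_le (x := a * max (ε - b) 0) (s := max (ε - b) 0) (t := ε) hkBT
    (mul_nonneg ha (le_max_right _ _)) hξ hb (by linarith [le_max_left (ε - b) 0])
  have h₃ : a * max (ε - b) 0 * exp (b / kBT) ≤ a * ε * exp (b / kBT) := by gcongr
  rw [zero_div, exp_zero, mul_one] at h₁
  unfold psi psiBound
  linarith

lemma psi_le_psiBound_mul_exp_div (hkBT : 0 ≤ kBT) (hε : 0 ≤ ε) (hξ : 0 < ξ) (ha : 0 ≤ a)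
    (hb : 0 ≤ b) :
    psi kBT ε ξ a b ≤ psiBound kBT a b ε * exp (-(ε / kBT)) / ξ := by
  rw [le_div_iff₀ hξ, exp_neg, ← div_eq_mul_inv, le_div_iff₀ (exp_pos _)]
  have := psi_mul_le_psiBound hkBT hε hξ.le ha hb
  nlinarith [psi_nonneg (kBT := kBT) hε hξ.le ha hb]

lemma psi_sub_le_lam (hkBT : 0 ≤ kBT) (hε : 0 ≤ ε) (hξ : 0 ≤ ξ) (ha : 0 ≤ a) (hb : 0 ≤ b)
    (hφ : 0 ≤ φ) :
    psi kBT ε ξ a b - φ * psiBound kBT a b ε ≤ lam kBT ε ξ a b φ := by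
  unfold lam
  nlinarith [mul_le_mul_of_nonneg_left (psi_mul_le_psiBound hkBT hε hξ ha hb) hφ]

lemma lam_le_psi (hε : 0 ≤ ε) (hξ : 0 ≤ ξ) (ha : 0 ≤ a) (hb : 0 ≤ b) (hφ : 0 ≤ φ) :
    lam kBT ε ξ a b φ ≤ psi kBT ε ξ a b := by
  have : 0 ≤ φ * (1 + ξ * exp (ε / kBT)) := by positivity
  unfold lam
  nlinarith [psi_nonneg (kBT := kBT) hε hξ ha hb]

lemma abs_lam_le (hkBT : 0 ≤ kBT) (hε : 0 ≤ ε) (hξ : 0 ≤ ξ) (ha : 0 ≤ a) (hb : 0 ≤ b)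
    (hφ : 0 ≤ φ) :
    |lam kBT ε ξ a b φ| ≤ psi kBT ε ξ a b + φ * psiBound kBT a b ε := by
  have := psi_nonneg (kBT := kBT) hε hξ ha hb
  have := mul_nonneg hφ (psiBound_nonneg (kBT := kBT) hε ha hb)
  rw [abs_le]
  constructor
  · linarith [psi_sub_le_lam (φ := φ) hkBT hε hξ ha hb hφ]
  · linarith [lam_le_psi (kBT := kBT) hε hξ ha hb hφ]

lemma half_le_psi (hε : 0 ≤ ε) (hξ : 0 ≤ ξ) (ha : 0 ≤ a) (hb : 0 ≤ b)
    (hsmall : ξ * exp ((ε + b) / kBT) ≤ 1) :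
    (a + 1) * (ε + b) / 2 ≤ psi kBT ε ξ a b := by
  have h₁ : (a + 1) * (ε + b) / 2 ≤ (a + 1) * (ε + b) / (1 + ξ * exp ((ε + b) / kBT)) := by
    gcongr; linarith
  have h₂ : 0 ≤ a * max (ε - b) 0 / (1 + ξ * exp (max (ε - b) 0 / kBT)) := by
    have : 0 ≤ max (ε - b) 0 := le_max_right _ _
    positivity
  unfold psi
  linarith

end Pointwise

section Integrability

variable {E : Type*} [NormedAddCommGroup E] [MeasurableSpace E] [BorelSpace E]

lemma integrable_of_abs_le_one_of_integrable_norm_mul [ProperSpace E] {μ : Measure E}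
    [IsFiniteMeasureOnCompacts μ] {f : E → ℝ} (hf : AEStronglyMeasurable f μ)
    (hf1 : ∀ x, |f x| ≤ 1) (hint : Integrable (fun x => ‖x‖ * f x) μ) : Integrable f μ := by
  have hball : Integrable ((closedBall (0 : E) 1).indicator fun _ => (1 : ℝ)) μ :=
    (integrable_indicator_iff measurableSet_closedBall).2
      ((integrableOn_const_iff (by finiteness)).2 (Or.inr measure_closedBall_lt_top))
  refine (hball.add hint.norm).mono' hf (.of_forall fun x => ?_)
  have hx := mul_nonneg (norm_nonneg x) (abs_nonneg (f x))
  rw [Real.norm_eq_abs, Pi.add_apply, norm_mul, norm_norm, Real.norm_eq_abs]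
  by_cases h : ‖x‖ ≤ 1
  · rw [Set.indicator_of_mem (by simpa using h)]
    linarith [hf1 x]
  · rw [Set.indicator_of_notMem (by simpa using h)]
    nlinarith [not_le.1 h, abs_nonneg (f x)]

lemma integrable_norm_pow_mul_exp_neg_mul_norm [NormedSpace ℝ E] [Nontrivial E]
    [FiniteDimensional ℝ E] (μ : Measure E) [μ.IsAddHaarMeasure] (n : ℕ) {d : ℝ}
    (hd : 0 < d) :
    Integrable (fun x : E => ‖x‖ ^ n * exp (-(d * ‖x‖))) μ := by
  rw [integrable_fun_norm_addHaar μ (f := fun y => y ^ n * exp (-(d * y)))]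
  refine (integrableOn_rpow_mul_exp_neg_mul_rpow (s := (Module.finrank ℝ E - 1 + n : ℕ))
    (neg_one_lt_zero.trans_le (Nat.cast_nonneg _)) one_pos hd).congr_fun (fun y _ => ?_)
    measurableSet_Ioi
  simp only [rpow_natCast, rpow_one, smul_eq_mul, pow_add, neg_mul]
  ring

end Integrability

section Integrals

variable {E : Type*} [NormedAddCommGroup E] [MeasurableSpace E]
  {kBT hvF a b ξ : ℝ}

lemma integrable_psi_comp_norm [BorelSpace E] [NormedSpace ℝ E] [Nontrivial E]
    [FiniteDimensional ℝ E] (μ : Measure E) [μ.IsAddHaarMeasure] (hkBT : 0 < kBT)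
    (hhvF : 0 < hvF) (ha : 0 ≤ a) (hb : 0 ≤ b) (hξ : 0 < ξ) :
    Integrable (fun x : E => psi kBT (hvF * ‖x‖) ξ a b) μ := by
  have hd : 0 < hvF / kBT := by positivity
  have h₁ := (integrable_norm_pow_mul_exp_neg_mul_norm μ 1 hd).const_mul
    (((a + 1) + a * exp (b / kBT)) * hvF)
  have h₀ := (integrable_norm_pow_mul_exp_neg_mul_norm μ 0 hd).const_mul ((a + 1) * b)
  refine ((h₁.add h₀).div_const ξ).mono' (by unfold psi; fun_prop) (.of_forall fun x => ?_)
  have hε : 0 ≤ hvF * ‖x‖ := by positivity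
  rw [Real.norm_eq_abs, abs_of_nonneg (psi_nonneg hε hξ.le ha hb)]
  refine (psi_le_psiBound_mul_exp_div hkBT.le hε hξ ha hb).trans_eq ?_
  rw [show hvF * ‖x‖ / kBT = hvF / kBT * ‖x‖ by ring, psiBound]
  simp only [Pi.add_apply, pow_one, pow_zero, one_mul]
  ring

lemma integrable_mul_psiBound_comp_norm {μ : Measure E} {f : E → ℝ} (hf : Integrable f μ)
    (hint : Integrable (fun x => hvF * ‖x‖ * f x) μ) :
    Integrable (fun x => f x * psiBound kBT a b (hvF * ‖x‖)) μ :=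
  ((hint.const_mul ((a + 1) + a * exp (b / kBT))).add (hf.const_mul ((a + 1) * b))).congr
    (.of_forall fun x => by simp only [Pi.add_apply, psiBound]; ring)

lemma integral_psi_sub_le_integral_lam [OpensMeasurableSpace E] {μ : Measure E} {f : E → ℝ}
    (hkBT : 0 ≤ kBT) (hhvF : 0 ≤ hvF) (ha : 0 ≤ a) (hb : 0 ≤ b) (hξ : 0 ≤ ξ) (hfm : Measurable f)
    (hf0 : ∀ x, 0 ≤ f x) (hψ : Integrable (fun x => psi kBT (hvF * ‖x‖) ξ a b) μ)
    (hB : Integrable (fun x => f x * psiBound kBT a b (hvF * ‖x‖)) μ) :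
    ∫ x, psi kBT (hvF * ‖x‖) ξ a b ∂μ - ∫ x, f x * psiBound kBT a b (hvF * ‖x‖) ∂μ ≤
      ∫ x, lam kBT (hvF * ‖x‖) ξ a b (f x) ∂μ := by
  have hε : ∀ x : E, 0 ≤ hvF * ‖x‖ := fun x => by positivity
  have hlam : Integrable (fun x => lam kBT (hvF * ‖x‖) ξ a b (f x)) μ :=
    (hψ.add hB).mono' (by unfold lam psi; fun_prop) (.of_forall fun x =>
      abs_lam_le hkBT (hε x) hξ ha hb (hf0 x))
  rw [← integral_sub hψ hB]
  exact integral_mono (hψ.sub hB) hlam fun x => psi_sub_le_lam hkBT (hε x) hξ ha hb (hf0 x)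

end Integrals

lemma volume_real_ball_diff_ball_fin_two (x : EuclideanSpace ℝ (Fin 2)) {r R : ℝ} (hr : 0 ≤ r)
    (hrR : r ≤ R) : volume.real (ball x R \ ball x r) = π * (R ^ 2 - r ^ 2) := by
  rw [measureReal_sdiff (ball_subset_ball hrR) measurableSet_ball measure_ball_lt_top.ne,
    measureReal_def, measureReal_def, EuclideanSpace.volume_ball_fin_two,
    EuclideanSpace.volume_ball_fin_two]
  simp only [ENNReal.toReal_mul, ENNReal.toReal_pow, ENNReal.toReal_ofReal, hr, hr.trans hrR,
    pi_pos.le]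
  ring

section Divergence

variable {kBT hvF a b : ℝ}

lemma annulus_bound_le_integral_psi (hkBT : 0 < kBT) (hhvF : 0 < hvF) (ha : 0 ≤ a)
    (hb : 0 ≤ b) {R μ : ℝ} (hR : 1 ≤ R) (hμ : hvF * R + b ≤ μ) :
    hvF / 2 * (π * (R ^ 2 - 1)) ≤
      ∫ x : EuclideanSpace ℝ (Fin 2), psi kBT (hvF * ‖x‖) (exp (-μ / kBT)) a b := by
  set S := ball (0 : EuclideanSpace ℝ (Fin 2)) R \ ball 0 1
  have hS : MeasurableSet S := measurableSet_ball.diff measurableSet_ball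
  have hind : Integrable (S.indicator fun _ => hvF / 2) volume :=
    (integrable_indicator_iff hS).2 ((integrableOn_const_iff (by finiteness)).2
      (Or.inr ((measure_mono Set.sdiff_subset).trans_lt measure_ball_lt_top)))
  calc hvF / 2 * (π * (R ^ 2 - 1))
      = ∫ x : EuclideanSpace ℝ (Fin 2), S.indicator (fun _ => hvF / 2) x := by
        rw [integral_indicator_const _ hS, volume_real_ball_diff_ball_fin_two 0 zero_le_one hR,
          one_pow, smul_eq_mul, mul_comm]
    _ ≤ _ := by
      refine integral_mono hind (integrable_psi_comp_norm volume hkBT hhvF ha hb (exp_pos _))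
        fun x => ?_
      have hε : 0 ≤ hvF * ‖x‖ := by positivity
      by_cases hx : x ∈ S
      · rw [Set.indicator_of_mem hx]
        obtain ⟨hxR, hx1⟩ := hx
        simp only [mem_ball, dist_zero_right, not_lt] at hxR hx1
        have hsmall : exp (-μ / kBT) * exp ((hvF * ‖x‖ + b) / kBT) ≤ 1 := by
          rw [← exp_add, exp_le_one_iff, ← add_div]
          refine div_nonpos_of_nonpos_of_nonneg ?_ hkBT.le
          nlinarith
        have := half_le_psi hε (exp_pos _).le ha hb hsmall
        nlinarith
      · rw [Set.indicator_of_notMem hx]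
        exact psi_nonneg hε (exp_pos _).le ha hb

lemma tendsto_integral_psi_atTop (hkBT : 0 < kBT) (hhvF : 0 < hvF) (ha : 0 ≤ a) (hb : 0 ≤ b) :
    Tendsto (fun μ => ∫ x : EuclideanSpace ℝ (Fin 2), psi kBT (hvF * ‖x‖) (exp (-μ / kBT)) a b)
      atTop atTop := by
  have hshell : Tendsto (fun R : ℝ => hvF / 2 * (π * (R ^ 2 - 1))) atTop atTop :=
    ((tendsto_atTop_add_const_right _ _ (tendsto_pow_atTop two_ne_zero)).const_mul_atTop
      pi_pos).const_mul_atTop (by positivity)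
  refine tendsto_atTop.2 fun M => ?_
  obtain ⟨R, hRM, hR⟩ := ((hshell.eventually_ge_atTop M).and (eventually_ge_atTop 1)).exists
  filter_upwards [eventually_ge_atTop (hvF * R + b)] with μ hμ
  exact hRM.trans (annulus_bound_le_integral_psi hkBT hhvF ha hb hR hμ)

end Divergence

/-- **Divergence of the collision integral as `μ → +∞`.** With `ε(k) = ħv_F·|k|`,
for `f : ℝ² → ℝ` measurable with values in `[0,1]` and `k ↦ ε(k)·f(k)` integrable,
`lim_{μ → +∞} ∫_{ℝ²} λ(ε(k), exp(−μ/k_BT); a, b; f(k)) dk = +∞`. -/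
theorem lam_integral_tendsto_atTop_mu
    (kBT hvF : ℝ) (hkBT : 0 < kBT) (hhvF : 0 < hvF)
    (a b : ℝ) (ha : 0 ≤ a) (hb : 0 ≤ b)
    (f : EuclideanSpace ℝ (Fin 2) → ℝ) (hfmeas : Measurable f)
    (hf01 : ∀ k, 0 ≤ f k ∧ f k ≤ 1)
    (hint : Integrable (fun k => hvF * ‖k‖ * f k) volume) :
    Tendsto (fun μ => ∫ k : EuclideanSpace ℝ (Fin 2),
        lam kBT (hvF * ‖k‖) (Real.exp (-μ / kBT)) a b (f k)) atTop atTop := by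
  have hf : Integrable f volume :=
    integrable_of_abs_le_one_of_integrable_norm_mul hfmeas.aestronglyMeasurable
      (fun k => abs_le.2 ⟨by linarith [(hf01 k).1], (hf01 k).2⟩)
      ((hint.const_mul hvF⁻¹).congr (.of_forall fun k => by field_simp))
  have hB := integrable_mul_psiBound_comp_norm (kBT := kBT) (a := a) (b := b) hf hint
  refine tendsto_atTop_mono (fun μ => integral_psi_sub_le_integral_lam hkBT.le hhvF.le ha hb
    (exp_pos _).le hfmeas (fun k => (hf01 k).1)
    (integrable_psi_comp_norm volume hkBT hhvF ha hb (exp_pos _)) hB) ?_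
  exact tendsto_atTop_add_const_right _ _ (tendsto_integral_psi_atTop hkBT hhvF ha hb)
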